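/- Let G be a (2 × 3)-game and define Y⁽¹⁾_k = X¹ 1 k − X¹ 2 k for k ∈ Fin 3 and Y⁽²⁾_i(k,l) = X² i k − X² i l for i ∈ Fin 2 and distinct k, l ∈ Fin 3. Suppose Y⁽¹⁾_1 > 0, Y⁽¹⁾_2 > 0, Y⁽¹⁾_3 < 0, Y⁽²⁾_1(1,2) < 0, Y⁽²⁾_1(1,3) < 0, Y⁽²⁾_1(2,3) > 0, Y⁽²⁾_2(1,2) > 0, Y⁽²⁾_2(1,3) > 0, Y⁽²⁾_2(2,3) < 0, and Y⁽²⁾_2(1,3)·Y⁽²⁾_1(2,3) < Y⁽²⁾_1(1,3)·Y⁽²⁾_2(2,3). Then the correlated equilibrium polytope P_G has maximal dimension 5, i.e. the dimension of the direction of its affine span equals 5. -/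

import Mathlib

/-!
The polytope lies in the hyperplane `∑ p = 1`, whose direction has dimension `5`. Under the sign
pattern one can write down a strictly positive point at which every incentive constraint with
`k ≠ l` holds strictly (those with `k = l` read `0 ≤ 0`). All points of the hyperplane near it
then lie in the polytope, so the polytope affinely spans the whole hyperplane.
-/

/-- The correlated equilibrium polytope of a `(2 × 3)`-game. -/
def CorrelatedEqPolytope (X1 X2 : Fin 2 → Fin 3 → ℝ) :
    Set (Fin 2 → Fin 3 → ℝ) :=
  {p | (∀ j k, 0 ≤ p j k) ∧ (∑ j, ∑ k, p j k = 1) ∧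
    (∀ k l : Fin 2, 0 ≤ ∑ j, (X1 k j - X1 l j) * p k j) ∧
    (∀ k l : Fin 3, 0 ≤ ∑ i, (X2 i k - X2 i l) * p i k)}

open Filter Topology

section AffineSpan

variable {V : Type*} [AddCommGroup V] [Module ℝ V] [TopologicalSpace V]
  [IsTopologicalAddGroup V] [ContinuousSMul ℝ V]

theorem affineSpan_eq_of_eventually_mem {A : AffineSubspace ℝ V} {s : Set V} {p : V}
    (hp : p ∈ A) (hsA : s ⊆ A) (hs : ∀ᶠ q in 𝓝 p, q ∈ A → q ∈ s) :
    affineSpan ℝ s = A := by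
  refine le_antisymm (affineSpan_le.mpr hsA) fun x hx => ?_
  have hps : p ∈ s := hs.self_of_nhds hp
  have hline : Tendsto (fun t : ℝ => t • (x - p) + p) (𝓝[≠] 0) (𝓝 p) := by
    have : Continuous fun t : ℝ => t • (x - p) + p := by fun_prop
    simpa using (this.tendsto 0).mono_left nhdsWithin_le_nhds
  obtain ⟨t, hts, ht⟩ := ((hline.eventually hs).and self_mem_nhdsWithin).exists
  have htA : t • (x - p) + p ∈ A :=
    AffineSubspace.vadd_mem_of_mem_direction
      (A.direction.smul_mem t (AffineSubspace.vsub_mem_direction hx hp)) hp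
  have htdir : t • (x - p) ∈ (affineSpan ℝ s).direction := by
    simpa using AffineSubspace.vsub_mem_direction (mem_affineSpan ℝ (hts htA))
      (mem_affineSpan ℝ hps)
  have hdir : x - p ∈ (affineSpan ℝ s).direction := by
    simpa [smul_smul, inv_mul_cancel₀ (show t ≠ 0 from ht)] using
      (affineSpan ℝ s).direction.smul_mem t⁻¹ htdir
  simpa using AffineSubspace.vadd_mem_of_mem_direction hdir (mem_affineSpan ℝ hps)

end AffineSpan

section TotalMass

variable {ι κ : Type*} [Fintype ι] [Fintype κ]

noncomputable def totalMass : Module.Dual ℝ (ι → κ → ℝ) where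
  toFun q := ∑ i, ∑ j, q i j
  map_add' q r := by simp only [Pi.add_apply, Finset.sum_add_distrib]
  map_smul' c q := by simp only [Pi.smul_apply, smul_eq_mul, Finset.mul_sum, RingHom.id_apply]

theorem totalMass_apply (q : ι → κ → ℝ) : totalMass q = ∑ i, ∑ j, q i j := rfl

theorem finrank_ker_totalMass_add_one [Nonempty ι] [Nonempty κ] :
    Module.finrank ℝ (LinearMap.ker (totalMass (ι := ι) (κ := κ))) + 1 =
      Fintype.card ι * Fintype.card κ := by
  have hne : (totalMass : Module.Dual ℝ (ι → κ → ℝ)) ≠ 0 := by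
    intro h
    have := LinearMap.congr_fun h fun _ _ => 1
    simp [totalMass_apply] at this
  rw [Module.Dual.finrank_ker_add_one_of_ne_zero hne]
  simp [Module.finrank_pi_fintype]

end TotalMass

def IsStrictCorrelatedEq (X1 X2 : Fin 2 → Fin 3 → ℝ) (q : Fin 2 → Fin 3 → ℝ) : Prop :=
  (∀ j k, 0 < q j k) ∧
    (∀ k l : Fin 2, k ≠ l → 0 < ∑ j, (X1 k j - X1 l j) * q k j) ∧
    (∀ k l : Fin 3, k ≠ l → 0 < ∑ i, (X2 i k - X2 i l) * q i k)

-- Column 2 is fixed first: its two constraints are compatible exactly because `c * e < d * f`.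
-- Then row 1 is made profitable with small `q 1 0, q 1 1`, column 0 with a smaller `q 0 0`,
-- and finally a large `q 0 1` takes care of column 1 and row 0.
theorem exists_pos_strict_incentives {a b c d e f s y₀ y₁ : ℝ} (ha : 0 < a) (hb : 0 < b)
    (hc : 0 < c) (hd : 0 < d) (he : 0 < e) (hf : 0 < f) (hs : 0 < s) (hy₀ : 0 < y₀)
    (hy₁ : 0 < y₁) (hcedf : c * e < d * f) :
    ∃ q : Fin 2 → Fin 3 → ℝ, (∀ j k, 0 < q j k) ∧
      s * q 0 2 < y₀ * q 0 0 + y₁ * q 0 1 ∧ y₀ * q 1 0 + y₁ * q 1 1 < s * q 1 2 ∧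
      b * q 0 0 < a * q 1 0 ∧ d * q 0 0 < c * q 1 0 ∧
      a * q 1 1 < b * q 0 1 ∧ f * q 1 1 < e * q 0 1 ∧
      c * q 1 2 < d * q 0 2 ∧ e * q 0 2 < f * q 1 2 := by
  obtain ⟨q02, q12, hq02, hq12, hcol20, hcol21⟩ :
      ∃ x y, 0 < x ∧ 0 < y ∧ c * y < d * x ∧ e * x < f * y :=
    ⟨2 * c * f, c * e + d * f, by positivity, by positivity, by nlinarith, by nlinarith⟩
  obtain ⟨q10, hq10, hrow10⟩ : ∃ x, 0 < x ∧ y₀ * x = s * q12 / 2 :=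
    ⟨s * q12 / (2 * y₀), by positivity, by field_simp⟩
  obtain ⟨q11, hq11, hrow11⟩ : ∃ x, 0 < x ∧ y₁ * x = s * q12 / 4 :=
    ⟨s * q12 / (4 * y₁), by positivity, by field_simp⟩
  obtain ⟨q00, hq00, hcol01, hcol02⟩ :
      ∃ x, 0 < x ∧ b * x < a * q10 ∧ d * x < c * q10 := by
    refine ⟨a * c * q10 / (a * d + b * c), by positivity, ?_, ?_⟩ <;>
      rw [mul_div_assoc', div_lt_iff₀ (by positivity)]
    · nlinarith [mul_pos (mul_pos (mul_pos ha ha) hd) hq10]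
    · nlinarith [mul_pos (mul_pos (mul_pos hb hc) hc) hq10]
  obtain ⟨q01, hq01, hcol10, hcol12, hrow01⟩ :
      ∃ x, 0 < x ∧ a * q11 < b * x ∧ f * q11 < e * x ∧ s * q02 < y₁ * x := by
    refine ⟨a * q11 / b + f * q11 / e + s * q02 / y₁, by positivity, ?_, ?_, ?_⟩
    · rw [mul_add, mul_add, mul_div_cancel₀ _ hb.ne', add_assoc]
      exact lt_add_of_pos_right _ (by positivity)
    · rw [mul_add, mul_add, mul_div_cancel₀ _ he.ne']
      linarith [show 0 < e * (a * q11 / b) by positivity,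
        show 0 < e * (s * q02 / y₁) by positivity]
    · rw [mul_add, mul_div_cancel₀ _ hy₁.ne']
      exact lt_add_of_pos_left _ (by positivity)
  refine ⟨![![q00, q01, q02], ![q10, q11, q12]], ?_, ?_, ?_, hcol01, hcol02, hcol10, hcol12,
    hcol20, hcol21⟩
  · intro j k
    fin_cases j <;> fin_cases k <;> assumption
  · show s * q02 < y₀ * q00 + y₁ * q01
    linarith [mul_pos hy₀ hq00]
  · show y₀ * q10 + y₁ * q11 < s * q12
    linarith [mul_pos hs hq12]

theorem exists_isStrictCorrelatedEq_of_sign_pattern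
    (X1 X2 : Fin 2 → Fin 3 → ℝ)
    (Y : Fin 3 → ℝ) (Z : Fin 2 → Fin 3 → Fin 3 → ℝ)
    (hY : ∀ k, Y k = X1 0 k - X1 1 k)
    (hZ : ∀ i k l, Z i k l = X2 i k - X2 i l)
    (h1 : 0 < Y 0) (h2 : 0 < Y 1) (h3 : Y 2 < 0)
    (h4 : Z 0 0 1 < 0) (h5 : Z 0 0 2 < 0) (h6 : 0 < Z 0 1 2)
    (h7 : 0 < Z 1 0 1) (h8 : 0 < Z 1 0 2) (h9 : Z 1 1 2 < 0)
    (h10 : Z 1 0 2 * Z 0 1 2 < Z 0 0 2 * Z 1 1 2) :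
    ∃ q, IsStrictCorrelatedEq X1 X2 q := by
  obtain ⟨q, hpos, hrow0, hrow1, hcol01, hcol02, hcol10, hcol12, hcol20, hcol21⟩ :=
    exists_pos_strict_incentives h7 (neg_pos.2 h4) h8 (neg_pos.2 h5) h6 (neg_pos.2 h9)
      (neg_pos.2 h3) h1 h2 (by rwa [neg_mul_neg])
  have hY_swap : ∀ k, X1 1 k - X1 0 k = -Y k := fun k => by rw [hY]; ring
  have hZ_swap : ∀ i k l, Z i l k = -Z i k l := fun i k l => by rw [hZ, hZ]; ring
  refine ⟨q, hpos, fun k l hkl => ?_, fun k l hkl => ?_⟩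
  · fin_cases k <;> fin_cases l <;> simp [Fin.sum_univ_three, ← hY, hY_swap] at hkl ⊢ <;>
      linarith
  · fin_cases k <;> fin_cases l <;>
      simp [← hZ, hZ_swap _ 0 1, hZ_swap _ 0 2, hZ_swap _ 1 2] at hkl ⊢ <;> linarith

namespace IsStrictCorrelatedEq

variable {X1 X2 q : Fin 2 → Fin 3 → ℝ}

theorem smul (hq : IsStrictCorrelatedEq X1 X2 q) {c : ℝ} (hc : 0 < c) :
    IsStrictCorrelatedEq X1 X2 (c • q) := by
  obtain ⟨hpos, hrow, hcol⟩ := hq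
  refine ⟨fun j k => mul_pos hc (hpos j k), fun k l hkl => ?_, fun k l hkl => ?_⟩
  · simpa [mul_left_comm _ c, ← Finset.mul_sum] using mul_pos hc (hrow k l hkl)
  · simpa [mul_left_comm _ c, ← Finset.mul_sum] using mul_pos hc (hcol k l hkl)

theorem exists_totalMass_eq_one (hq : IsStrictCorrelatedEq X1 X2 q) :
    ∃ p, IsStrictCorrelatedEq X1 X2 p ∧ totalMass p = 1 := by
  have hmass : 0 < totalMass q :=
    Finset.sum_pos (fun j _ => Finset.sum_pos (fun k _ => hq.1 j k) Finset.univ_nonempty)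
      Finset.univ_nonempty
  exact ⟨(totalMass q)⁻¹ • q, hq.smul (inv_pos.2 hmass),
    by rw [map_smul, smul_eq_mul, inv_mul_cancel₀ hmass.ne']⟩

theorem eventually_mem_correlatedEqPolytope (hq : IsStrictCorrelatedEq X1 X2 q) :
    ∀ᶠ r in 𝓝 q, totalMass r = 1 → r ∈ CorrelatedEqPolytope X1 X2 := by
  obtain ⟨hpos, hrow, hcol⟩ := hq
  have hnonneg : ∀ g : (Fin 2 → Fin 3 → ℝ) → ℝ, Continuous g → 0 < g q →
      ∀ᶠ r in 𝓝 q, 0 ≤ g r := fun g hg h =>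
    ((hg.tendsto q).eventually (lt_mem_nhds h)).mono fun _ => le_of_lt
  have hentries : ∀ᶠ r in 𝓝 q, ∀ j k, 0 ≤ r j k :=
    eventually_all.2 fun j => eventually_all.2 fun k => hnonneg _ (by fun_prop) (hpos j k)
  have hrows : ∀ᶠ r in 𝓝 q, ∀ k l : Fin 2, 0 ≤ ∑ j, (X1 k j - X1 l j) * r k j := by
    refine eventually_all.2 fun k => eventually_all.2 fun l => ?_
    rcases eq_or_ne k l with rfl | hkl
    · simp
    · exact hnonneg _ (by fun_prop) (hrow k l hkl)
  have hcols : ∀ᶠ r in 𝓝 q, ∀ k l : Fin 3, 0 ≤ ∑ i, (X2 i k - X2 i l) * r i k := by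
    refine eventually_all.2 fun k => eventually_all.2 fun l => ?_
    rcases eq_or_ne k l with rfl | hkl
    · simp
    · exact hnonneg _ (by fun_prop) (hcol k l hkl)
  filter_upwards [hentries, hrows, hcols] with r hr_entries hr_rows hr_cols hr_mass
  exact ⟨hr_entries, hr_mass, hr_rows, hr_cols⟩

end IsStrictCorrelatedEq

/-- A sign pattern on the payoff differences of a `(2 × 3)`-game (one basic
semialgebraic piece of the region of full-dimensionality) forces the correlated
equilibrium polytope to have maximal dimension `5`. -/
theorem maximal_dim_of_sign_pattern_2x3
    (X1 X2 : Fin 2 → Fin 3 → ℝ)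
    (Y : Fin 3 → ℝ) (Z : Fin 2 → Fin 3 → Fin 3 → ℝ)
    (hY : ∀ k, Y k = X1 0 k - X1 1 k)
    (hZ : ∀ i k l, Z i k l = X2 i k - X2 i l)
    (h1 : 0 < Y 0) (h2 : 0 < Y 1) (h3 : Y 2 < 0)
    (h4 : Z 0 0 1 < 0) (h5 : Z 0 0 2 < 0) (h6 : 0 < Z 0 1 2)
    (h7 : 0 < Z 1 0 1) (h8 : 0 < Z 1 0 2) (h9 : Z 1 1 2 < 0)
    (h10 : Z 1 0 2 * Z 0 1 2 < Z 0 0 2 * Z 1 1 2) :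
    Module.finrank ℝ (affineSpan ℝ (CorrelatedEqPolytope X1 X2)).direction = 5 := by
  obtain ⟨q, hq⟩ := exists_isStrictCorrelatedEq_of_sign_pattern X1 X2 Y Z hY hZ
    h1 h2 h3 h4 h5 h6 h7 h8 h9 h10
  obtain ⟨p, hp, hp_mass⟩ := hq.exists_totalMass_eq_one
  set H := AffineSubspace.mk' p (LinearMap.ker totalMass)
  have hH : ∀ r, r ∈ H ↔ totalMass r = 1 := fun r => by
    rw [AffineSubspace.mem_mk', LinearMap.mem_ker, vsub_eq_sub, map_sub, hp_mass, sub_eq_zero]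
  have hspan : affineSpan ℝ (CorrelatedEqPolytope X1 X2) = H :=
    affineSpan_eq_of_eventually_mem (AffineSubspace.self_mem_mk' p _)
      (fun r hr => (hH r).2 hr.2.1)
      (hp.eventually_mem_correlatedEqPolytope.mono fun r hr hrH => hr ((hH r).1 hrH))
  have hker := finrank_ker_totalMass_add_one (ι := Fin 2) (κ := Fin 3)
  rw [Fintype.card_fin, Fintype.card_fin] at hker
  rw [hspan, AffineSubspace.direction_mk']
  omega
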